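/- Let x_1, …, x_n ∈ ℝ^{2n} be an orthonormal family spanning a Lagrangian subspace, i.e. x_iᵀ x_j = δ_{ij} and x_iᵀ J x_j = 0 for all i, j, and let Ĥ := X_R X_Lᵀ + Jᵀ X_L X_Rᵀ J. Then Ĥᵀ Ĥ = X_L X_Lᵀ + Jᵀ X_R X_Rᵀ J, and this matrix is idempotent: (Ĥᵀ Ĥ)² = Ĥᵀ Ĥ. -/

import Mathlib

open Matrix

noncomputable section

/-- The canonical skew-symmetric matrix `J = [[0, I],[-I, 0]]`. -/
def Jmat (n : ℕ) : Matrix (Fin n ⊕ Fin n) (Fin n ⊕ Fin n) ℝ :=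
  Matrix.fromBlocks 0 1 (-1) 0

/-- A matrix `H` is skew-Hamiltonian if `Jᵀ Hᵀ J = H`. -/
def IsSkewHamiltonian {n : ℕ} (H : Matrix (Fin n ⊕ Fin n) (Fin n ⊕ Fin n) ℝ) : Prop :=
  (Jmat n)ᵀ * Hᵀ * Jmat n = H

/-- `X_L = [x_1 ⋯ x_{n-1}]`. -/
def XL {n : ℕ} (x : Fin n → (Fin n ⊕ Fin n) → ℝ) :
    Matrix (Fin n ⊕ Fin n) (Fin (n - 1)) ℝ :=
  Matrix.of fun i j => x ⟨j.1, lt_of_lt_of_le j.2 (Nat.sub_le n 1)⟩ i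

/-- `X_R = [x_2 ⋯ x_n]`. -/
def XR {n : ℕ} (x : Fin n → (Fin n ⊕ Fin n) → ℝ) :
    Matrix (Fin n ⊕ Fin n) (Fin (n - 1)) ℝ :=
  Matrix.of fun i j => x ⟨j.1 + 1, by have := j.2; omega⟩ i

/-- The Moore–Penrose pseudoinverse `X_L⁺ = (X_Lᵀ X_L)⁻¹ X_Lᵀ` of `X_L`
(for `X_L` with linearly independent columns). -/
def XLpinv {n : ℕ} (x : Fin n → (Fin n ⊕ Fin n) → ℝ) :
    Matrix (Fin (n - 1)) (Fin n ⊕ Fin n) ℝ :=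
  ((XL x)ᵀ * XL x)⁻¹ * (XL x)ᵀ

/-- `Ĥ = X_R X_L⁺ + Jᵀ (X_R X_L⁺)ᵀ J`. -/
def Hhat {n : ℕ} (x : Fin n → (Fin n ⊕ Fin n) → ℝ) :
    Matrix (Fin n ⊕ Fin n) (Fin n ⊕ Fin n) ℝ :=
  XR x * XLpinv x + (Jmat n)ᵀ * (XR x * XLpinv x)ᵀ * Jmat n

/-- `H` realizes the Krylov relations `H x_k = x_{k+1}`, `k = 1, …, n-1`. -/
def KrylovRel {n : ℕ} (H : Matrix (Fin n ⊕ Fin n) (Fin n ⊕ Fin n) ℝ)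
    (x : Fin n → (Fin n ⊕ Fin n) → ℝ) : Prop :=
  ∀ k : Fin (n - 1), H *ᵥ x ⟨k.1, lt_of_lt_of_le k.2 (Nat.sub_le n 1)⟩
    = x ⟨k.1 + 1, by have := k.2; omega⟩

/-! Write `P := X_L X_Lᵀ + Jᵀ X_R X_Rᵀ J = A Aᵀ + B Bᵀ` with `A = X_L`, `B = Jᵀ X_R`, and
`Ĥ = C Aᵀ + D Bᵀ` with `C = X_R`, `D = Jᵀ X_L`. Since `J` is orthogonal and the `x_i` are
orthonormal, each of `A, B, C, D` has orthonormal columns, and the Lagrangian condition makes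
`Aᵀ B` and `Cᵀ D` vanish. For such `C, D` one has `(C Aᵀ + D Bᵀ)ᵀ (C Aᵀ + D Bᵀ) = A Aᵀ + B Bᵀ`;
taking `C = A`, `D = B` gives `Pᵀ P = P`, and `P` is symmetric. -/

section OrthonormalColumns

variable {R : Type*} [CommRing R] {m p k l : Type*} [Fintype m] [Fintype k] [Fintype l]
  [DecidableEq k] [DecidableEq l]

theorem transpose_mul_self_of_orthonormal_cols (A : Matrix p k R) (B : Matrix p l R)
    {C : Matrix m k R} {D : Matrix m l R} (hC : Cᵀ * C = 1) (hD : Dᵀ * D = 1)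
    (hCD : Cᵀ * D = 0) :
    (C * Aᵀ + D * Bᵀ)ᵀ * (C * Aᵀ + D * Bᵀ) = A * Aᵀ + B * Bᵀ := by
  have hDC : Dᵀ * C = 0 := by rw [← transpose_transpose (Dᵀ * C), transpose_mul,
    transpose_transpose, hCD, transpose_zero]
  simp only [transpose_add, transpose_mul, transpose_transpose, Matrix.add_mul, Matrix.mul_add,
    Matrix.mul_assoc, ← Matrix.mul_assoc Cᵀ, ← Matrix.mul_assoc Dᵀ, hC, hD, hCD, hDC,
    Matrix.one_mul, Matrix.zero_mul, Matrix.mul_zero, add_zero, zero_add]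

theorem isIdempotentElem_mul_transpose_add {A : Matrix m k R} {B : Matrix m l R}
    (hA : Aᵀ * A = 1) (hB : Bᵀ * B = 1) (hAB : Aᵀ * B = 0) :
    IsIdempotentElem (A * Aᵀ + B * Bᵀ) := by
  have h := transpose_mul_self_of_orthonormal_cols A B hA hB hAB
  rwa [transpose_add, transpose_mul, transpose_mul, transpose_transpose, transpose_transpose] at h

end OrthonormalColumns

theorem transpose_mul_self_of_mul_transpose_eq_one {R m k : Type*} [CommRing R] [Fintype m]
    [DecidableEq m] [DecidableEq k] {Q : Matrix m m R} {C : Matrix m k R}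
    (hQ : Q * Qᵀ = 1) (hC : Cᵀ * C = 1) : (Qᵀ * C)ᵀ * (Qᵀ * C) = 1 := by
  rw [transpose_mul, transpose_transpose, Matrix.mul_assoc, ← Matrix.mul_assoc Q, hQ,
    Matrix.one_mul, hC]

theorem conj_mul_transpose_eq {R m n k : Type*} [CommRing R] [Fintype m] [Fintype k]
    (Q : Matrix m n R) (A B : Matrix m k R) :
    Qᵀ * (A * Bᵀ) * Q = (Qᵀ * A) * (Qᵀ * B)ᵀ := by
  rw [transpose_mul, transpose_transpose, Matrix.mul_assoc, Matrix.mul_assoc, Matrix.mul_assoc]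

section ColumnMatrices

variable {R : Type*} [CommRing R] {ι m k l : Type*} [Fintype m] (x : ι → m → R)

theorem of_cols_transpose_mul_mul_of_cols (f : k → ι) (g : l → ι) (Q : Matrix m m R) :
    (of fun i j => x (f j) i)ᵀ * Q * of (fun i j => x (g j) i)
      = of fun i j => x (f i) ⬝ᵥ (Q *ᵥ x (g j)) := by
  ext i j
  simp only [mul_apply, transpose_apply, of_apply, mulVec, dotProduct, Finset.mul_sum,
    Finset.sum_mul, mul_assoc]
  exact Finset.sum_comm

theorem of_cols_transpose_mul_of_cols_eq_one [DecidableEq ι] [DecidableEq k] [DecidableEq m]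
    (hON : ∀ i j, x i ⬝ᵥ x j = if i = j then 1 else 0) {f : k → ι} (hf : f.Injective) :
    (of fun i j => x (f j) i)ᵀ * of (fun i j => x (f j) i) = 1 := by
  have h := of_cols_transpose_mul_mul_of_cols x f f 1
  rw [Matrix.mul_one] at h
  ext i j
  simp only [h, of_apply, one_mulVec, hON, hf.eq_iff, one_apply]

theorem of_cols_transpose_mul_mul_of_cols_eq_zero {Q : Matrix m m R}
    (hQ : ∀ i j, x i ⬝ᵥ (Q *ᵥ x j) = 0) (f : k → ι) (g : l → ι) :
    (of fun i j => x (f j) i)ᵀ * Q * of (fun i j => x (g j) i) = 0 := by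
  ext i j
  simp only [of_cols_transpose_mul_mul_of_cols, of_apply, hQ, Matrix.zero_apply]

end ColumnMatrices

theorem Jmat_transpose (n : ℕ) : (Jmat n)ᵀ = -Jmat n := by
  simp [Jmat, fromBlocks_transpose, fromBlocks_neg]

theorem Jmat_mul_transpose (n : ℕ) : Jmat n * (Jmat n)ᵀ = 1 := by
  simp [Jmat, fromBlocks_transpose, fromBlocks_multiply, ← fromBlocks_one]

section Columns

variable {n : ℕ} (x : Fin n → (Fin n ⊕ Fin n) → ℝ)

theorem XL_transpose_mul_XL (hON : ∀ i j : Fin n, x i ⬝ᵥ x j = if i = j then 1 else 0) :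
    (XL x)ᵀ * XL x = 1 :=
  of_cols_transpose_mul_of_cols_eq_one x hON (f := fun j : Fin (n - 1) => ⟨j, by omega⟩)
    fun i j h => Fin.ext (Fin.mk.inj h)

theorem XR_transpose_mul_XR (hON : ∀ i j : Fin n, x i ⬝ᵥ x j = if i = j then 1 else 0) :
    (XR x)ᵀ * XR x = 1 :=
  of_cols_transpose_mul_of_cols_eq_one x hON (f := fun j : Fin (n - 1) => ⟨j + 1, by omega⟩)
    fun i j h => Fin.ext (Nat.succ_injective (Fin.mk.inj h))

theorem dotProduct_Jmat_transpose_mulVec_eq_zero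
    (hLag : ∀ i j : Fin n, x i ⬝ᵥ (Jmat n *ᵥ x j) = 0) (i j : Fin n) :
    x i ⬝ᵥ ((Jmat n)ᵀ *ᵥ x j) = 0 := by
  rw [Jmat_transpose, neg_mulVec, dotProduct_neg, hLag, neg_zero]

theorem XL_transpose_mul_Jmat_transpose_mul_XR
    (hLag : ∀ i j : Fin n, x i ⬝ᵥ (Jmat n *ᵥ x j) = 0) :
    (XL x)ᵀ * ((Jmat n)ᵀ * XR x) = 0 := by
  rw [← Matrix.mul_assoc]
  exact of_cols_transpose_mul_mul_of_cols_eq_zero x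
    (dotProduct_Jmat_transpose_mulVec_eq_zero x hLag) _ _

theorem XR_transpose_mul_Jmat_transpose_mul_XL
    (hLag : ∀ i j : Fin n, x i ⬝ᵥ (Jmat n *ᵥ x j) = 0) :
    (XR x)ᵀ * ((Jmat n)ᵀ * XL x) = 0 := by
  rw [← Matrix.mul_assoc]
  exact of_cols_transpose_mul_mul_of_cols_eq_zero x
    (dotProduct_Jmat_transpose_mulVec_eq_zero x hLag) _ _

end Columns

/-- For an orthonormal basis of a Lagrangian subspace and
`Ĥ = X_R X_Lᵀ + Jᵀ X_L X_Rᵀ J`, one has `Ĥᵀ Ĥ = X_L X_Lᵀ + Jᵀ X_R X_Rᵀ J`, and this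
matrix is idempotent. -/
theorem Hhat_transpose_mul_Hhat {n : ℕ} (x : Fin n → (Fin n ⊕ Fin n) → ℝ)
    (hON : ∀ i j : Fin n, x i ⬝ᵥ x j = if i = j then 1 else 0)
    (hLag : ∀ i j : Fin n, x i ⬝ᵥ (Jmat n *ᵥ x j) = 0) :
    (XR x * (XL x)ᵀ + (Jmat n)ᵀ * (XL x * (XR x)ᵀ) * Jmat n)ᵀ *
      (XR x * (XL x)ᵀ + (Jmat n)ᵀ * (XL x * (XR x)ᵀ) * Jmat n)
      = XL x * (XL x)ᵀ + (Jmat n)ᵀ * (XR x * (XR x)ᵀ) * Jmat n ∧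
    (XL x * (XL x)ᵀ + (Jmat n)ᵀ * (XR x * (XR x)ᵀ) * Jmat n) *
      (XL x * (XL x)ᵀ + (Jmat n)ᵀ * (XR x * (XR x)ᵀ) * Jmat n)
      = XL x * (XL x)ᵀ + (Jmat n)ᵀ * (XR x * (XR x)ᵀ) * Jmat n := by
  rw [conj_mul_transpose_eq, conj_mul_transpose_eq]
  have hJ := Jmat_mul_transpose n
  have hL := XL_transpose_mul_XL x hON
  have hR := XR_transpose_mul_XR x hON
  exact ⟨transpose_mul_self_of_orthonormal_cols _ _ hR
      (transpose_mul_self_of_mul_transpose_eq_one hJ hL)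
      (XR_transpose_mul_Jmat_transpose_mul_XL x hLag),
    (isIdempotentElem_mul_transpose_add hL
      (transpose_mul_self_of_mul_transpose_eq_one hJ hR)
      (XL_transpose_mul_Jmat_transpose_mul_XR x hLag)).eq⟩
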